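/- arXiv:1904.07805 — 8 statements merged into one kernel-verified Lean document; each statement's English description precedes it below -/
import Mathlib

section
/- If (X,·) is a non-degenerate left cycle set, then the map r: X×X → X×X defined by r(x,y) = (λ_x(y), ρ_y(x)), where λ_x = σ_x^{-1} and ρ_y(x) = λ_x(y)·x, is a non-degenerate involutive set-theoretic solution of the Yang-Baxter equation, i.e. r is bijective, r² = id, r₁r₂r₁ = r₂r₁r₂ (with r₁ = r×id, r₂ = id×r), and all maps λ_x and ρ_y are bijective. -/
/-- A left cycle set: each left multiplication `op x` is bijective and the
cycloid identity `(x·y)·(x·z) = (y·x)·(y·z)` holds. -/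
def IsCycleSet {X : Type*} (op : X → X → X) : Prop :=
  (∀ x, Function.Bijective (op x)) ∧
  ∀ x y z, op (op x y) (op x z) = op (op y x) (op y z)

/-- Square-free: `x·x = x` for all `x`. -/
def IsSquareFree {X : Type*} (op : X → X → X) : Prop := ∀ x, op x x = x

/-- Non-degenerate: the squaring map `x ↦ x·x` is bijective. -/
def IsNonDeg {X : Type*} (op : X → X → X) : Prop :=
  Function.Bijective (fun x => op x x)

/-- An automorphism of a left cycle set. -/
def IsAut {X : Type*} (op : X → X → X) (α : X → X) : Prop :=
  Function.Bijective α ∧ ∀ x y, α (op x y) = op (α x) (α y)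

/-- Irretractable: the map `x ↦ σ_x` is injective. -/
def IsIrretractable {X : Type*} (op : X → X → X) : Prop := Function.Injective op

/-- `retRel op n x y` says `σ_{[n]}(x) = σ_{[n]}(y)`, i.e. `x` and `y` have the same
image in the `n`-th retraction `σⁿ(X)`. -/
def retRel {X : Type*} (op : X → X → X) : ℕ → X → X → Prop
  | 0 => Eq
  | n + 1 => fun x y => ∀ z, retRel op n (op x z) (op y z)

/-- `X` has multipermutational level `m`: `m` is minimal with `|σᵐ(X)| = 1`. -/
def HasMPL {X : Type*} (op : X → X → X) (m : ℕ) : Prop :=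
  (∀ x y, retRel op m x y) ∧ ∀ k < m, ¬ (∀ x y, retRel op k x y)

/-- The solution `r(x,y) = (λ_x(y), λ_x(y)·x)` associated to a cycle set,
where `lam x` is the inverse of `op x`. -/
def rmap {X : Type*} (op lam : X → X → X) : X × X → X × X :=
  fun p => (lam p.1 p.2, op (lam p.1 p.2) p.1)

/-- `r × id`. -/
def r1map {X : Type*} (r : X × X → X × X) : X × X × X → X × X × X :=
  fun p => ((r (p.1, p.2.1)).1, ((r (p.1, p.2.1)).2, p.2.2))

/-- `id × r`. -/
def r2map {X : Type*} (r : X × X → X × X) : X × X × X → X × X × X :=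
  fun p => (p.1, r p.2)

/-- One-sided extension of a cycle set by an automorphism `α`, with `none` as the
new element `z`: `x∘y = x·y`, `x∘z = z`, `z∘y = α(y)`. -/
def extOp {X : Type*} (op : X → X → X) (α : X → X) :
    Option X → Option X → Option X
  | some x, some y => some (op x y)
  | _, none => none
  | none, some y => some (α y)

/-- The dynamical extension `X × ℤ/2ℤ` with `(x,s)·(y,t) = (x·y, t + 1 - δ_{x,y})`. -/
def doubleOp {X : Type*} [DecidableEq X] (op : X → X → X) :
    X × ZMod 2 → X × ZMod 2 → X × ZMod 2 :=
  fun p q => (op p.1 q.1, if p.1 = q.1 then q.2 else q.2 + 1)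

/-- The Bachiller–Cedó–Jespers–Okniński operation on `A × B × I`. -/
def bcjoOp {A B I : Type*} [AddCommGroup A] [AddCommGroup B] [DecidableEq I]
    (φ₁ : A → B) (φ₂ : B →+ A) : A × B × I → A × B × I → A × B × I :=
  fun p q =>
    if p.2.2 = q.2.2 then (q.1, q.2.1 - φ₁ (p.1 - q.1), q.2.2)
    else (q.1 - φ₂ p.2.1, q.2.1, q.2.2)

/-- One-sided extension of `X` by a cycle set `Y` acting by automorphisms:
`x∘y = x·y` inside `X` and `Y`, `x∘y = y` for `x ∈ X, y ∈ Y`, `y∘x = α(y)(x)`. -/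
def sumOp {X Y : Type*} (opX : X → X → X) (opY : Y → Y → Y) (α : Y → X → X) :
    X ⊕ Y → X ⊕ Y → X ⊕ Y
  | .inl p, .inl q => .inl (opX p q)
  | .inl _, .inr y => .inr y
  | .inr y, .inl q => .inl (α y q)
  | .inr y, .inr y' => .inr (opY y y')

/-- The set of cardinalities of finite square-free non-degenerate cycle sets of
multipermutational level `m`; `N_m` is its infimum. -/
def Nset (m : ℕ) : Set ℕ :=
  {n | ∃ (X : Type) (op : X → X → X), Finite X ∧ IsCycleSet op ∧ IsSquareFree op ∧
        IsNonDeg op ∧ HasMPL op m ∧ Nat.card X = n}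

/-- The set of cardinalities of finite square-free cycle sets of level `k` admitting
an automorphism `α` with `σ_{[k-1]}(x) ≠ σ_{[k-1]}(α(x))` for some `x`;
`N̄_k` is its infimum. -/
def NbarSet (k : ℕ) : Set ℕ :=
  {n | ∃ (X : Type) (op : X → X → X), Finite X ∧ IsCycleSet op ∧ IsSquareFree op ∧
        HasMPL op k ∧ (∃ (α : X → X) (x : X), IsAut op α ∧ ¬ retRel op (k - 1) x (α x)) ∧
        Nat.card X = n}

/-!
Since `λ_x` inverts `σ_x`, `r` is an involution, and writing a triple as
`(x, x·b, (x·b)·(x·c))` reduces the braid relation to the cycloid identity.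
The cycloid identity at `(x, λ_x(y), λ_x(y))` reads `q(y) = ρ_y(x) · q(λ_x(y))`. Hence `ρ_y(x)`
determines `λ_x(y)` by injectivity of `q`, and then `x`; and `ρ_y(x) = w` is solved by
`x = λ_a(w)` where `q(a) = λ_w(q(y))`.
-/

section CycleSetSolution

variable {X : Type*} {op lam : X → X → X}

theorem rmap_involutive (hlam : ∀ x y, lam x (op x y) = y ∧ op x (lam x y) = y) :
    Function.Involutive (rmap op lam) := by
  rintro ⟨x, y⟩
  simp [rmap, (hlam _ _).1, (hlam _ _).2]

theorem rmap_braid (hlam : ∀ x y, lam x (op x y) = y ∧ op x (lam x y) = y)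
    (hcyc : ∀ x y z, op (op x y) (op x z) = op (op y x) (op y z)) :
    r1map (rmap op lam) ∘ r2map (rmap op lam) ∘ r1map (rmap op lam) =
      r2map (rmap op lam) ∘ r1map (rmap op lam) ∘ r2map (rmap op lam) := by
  have lam_op : ∀ x y, lam x (op x y) = y := fun x y => (hlam x y).1
  funext ⟨x, y, z⟩
  obtain ⟨b, rfl⟩ : ∃ b, op x b = y := ⟨lam x y, (hlam x y).2⟩
  obtain ⟨c, rfl⟩ : ∃ c, op (op x b) (op x c) = z :=
    ⟨lam x (lam (op x b) z), by rw [(hlam _ _).2, (hlam _ _).2]⟩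
  have hbc : lam (op b x) (op (op x b) (op x c)) = op b c := by rw [hcyc x b c, lam_op]
  have hcb : lam (op c x) (op (op x c) (op x b)) = op c b := by rw [hcyc x c b, lam_op]
  simp only [Function.comp_apply, r1map, r2map, rmap, lam_op, hbc, hcb, hcyc b c x]

theorem lam_bijective (hlam : ∀ x y, lam x (op x y) = y ∧ op x (lam x y) = y) (x : X) :
    Function.Bijective (lam x) :=
  Function.bijective_iff_has_inverse.2 ⟨op x, fun y => (hlam x y).2, fun y => (hlam x y).1⟩

theorem op_self_eq_op_rho_op_self_lam (hlam : ∀ x y, lam x (op x y) = y ∧ op x (lam x y) = y)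
    (hcyc : ∀ x y z, op (op x y) (op x z) = op (op y x) (op y z)) (x y : X) :
    op y y = op (op (lam x y) x) (op (lam x y) (lam x y)) := by
  conv_lhs => rw [← (hlam x y).2]
  exact hcyc x _ _

theorem rho_injective (hlam : ∀ x y, lam x (op x y) = y ∧ op x (lam x y) = y)
    (hcyc : ∀ x y z, op (op x y) (op x z) = op (op y x) (op y z))
    (hq : Function.Injective fun x => op x x) (y : X) :
    Function.Injective fun x => op (lam x y) x := by
  have op_injective : ∀ a, Function.Injective (op a) :=
    fun a => Function.LeftInverse.injective fun b => (hlam a b).1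
  intro x x' (hρ : op (lam x y) x = op (lam x' y) x')
  have hlam_eq : lam x y = lam x' y := by
    apply hq
    apply op_injective (op (lam x y) x)
    show op _ (op (lam x y) (lam x y)) = op _ (op (lam x' y) (lam x' y))
    rw [← op_self_eq_op_rho_op_self_lam hlam hcyc, hρ, ← op_self_eq_op_rho_op_self_lam hlam hcyc]
  rw [hlam_eq] at hρ
  exact op_injective _ hρ

theorem rho_surjective (hlam : ∀ x y, lam x (op x y) = y ∧ op x (lam x y) = y)
    (hcyc : ∀ x y z, op (op x y) (op x z) = op (op y x) (op y z))
    (hnd : IsNonDeg op) (y : X) :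
    Function.Surjective fun x => op (lam x y) x := by
  intro w
  obtain ⟨a, ha⟩ := hnd.surjective (lam w (op y y))
  refine ⟨lam a w, ?_⟩
  have hax : op a (lam a w) = w := (hlam a w).2
  have hxa : op (lam a w) a = y := by
    apply hnd.injective
    change op a a = lam w (op y y) at ha
    show op (op (lam a w) a) (op (lam a w) a) = op y y
    rw [← hcyc a (lam a w) a, hax, ha, (hlam w _).2]
  show op (lam (lam a w) y) (lam a w) = w
  rw [← hxa, (hlam _ a).1, hax]

end CycleSetSolution

/-- A non-degenerate left cycle set gives a non-degenerate involutive
set-theoretic solution of the Yang–Baxter equation. -/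
theorem stmt0 {X : Type*} (op : X → X → X) (h : IsCycleSet op) (hnd : IsNonDeg op)
    (lam : X → X → X) (hlam : ∀ x y, lam x (op x y) = y ∧ op x (lam x y) = y) :
    Function.Bijective (rmap op lam) ∧
    (rmap op lam) ∘ (rmap op lam) = id ∧
    (r1map (rmap op lam)) ∘ (r2map (rmap op lam)) ∘ (r1map (rmap op lam)) =
      (r2map (rmap op lam)) ∘ (r1map (rmap op lam)) ∘ (r2map (rmap op lam)) ∧
    (∀ x, Function.Bijective (lam x)) ∧
    (∀ y, Function.Bijective (fun x => op (lam x y) x)) := by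
  have hcyc := h.2
  have hr := rmap_involutive hlam
  exact ⟨hr.bijective, hr.comp_self, rmap_braid hlam hcyc, lam_bijective hlam,
    fun y => ⟨rho_injective hlam hcyc hnd.injective y, rho_surjective hlam hcyc hnd y⟩⟩
end

section
/- Conversely, if (X,r) is a non-degenerate involutive set-theoretic solution of the Yang-Baxter equation with r(x,y) = (λ_x(y), ρ_y(x)), then the binary operation x·y := λ_x^{-1}(y) makes X into a non-degenerate left cycle set. -/
/-! Writing `r(x,y) = (λ_x y, ρ_y x)`, involutivity gives `λ_{λ_x y}(ρ_y x) = x`, so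
`ρ_y x = (λ_x y)·x`; substituting `y = x·u` in the first component of the braid relation
turns it into the symmetric identity `λ_u λ_{u·x} = λ_x λ_{x·u}`, whose inverse is the
cycloid law. For non-degeneracy, involutivity shows `x·x = t ↔ ρ_t x = t`, and `ρ_t` is a
bijection. -/

section InvolutiveSolution

variable {X : Type*} {r : X × X → X × X} {lam rho : X → X → X}

theorem lam_lam_rho_of_involutive (hr : ∀ x y, r (x, y) = (lam x y, rho y x))
    (hinv : r ∘ r = id) (x y : X) : lam (lam x y) (rho y x) = x := by
  simpa [hr] using congrArg Prod.fst (congrFun hinv (x, y))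

theorem rho_rho_lam_of_involutive (hr : ∀ x y, r (x, y) = (lam x y, rho y x))
    (hinv : r ∘ r = id) (x y : X) : rho (rho y x) (lam x y) = y := by
  simpa [hr] using congrArg Prod.snd (congrFun hinv (x, y))

theorem lam_lam_of_braid (hr : ∀ x y, r (x, y) = (lam x y, rho y x))
    (hbraid : (r1map r) ∘ (r2map r) ∘ (r1map r) = (r2map r) ∘ (r1map r) ∘ (r2map r))
    (x y z : X) : lam (lam x y) (lam (rho y x) z) = lam x (lam y z) := by
  simpa [r1map, r2map, hr] using congrArg Prod.fst (congrFun hbraid (x, y, z))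

end InvolutiveSolution

section OpOfLam

variable {X : Type*} {lam rho op : X → X → X}
  (hop : ∀ x y, lam x (op x y) = y ∧ op x (lam x y) = y)
include hop

theorem lam_injective (x : X) : Function.Injective (lam x) :=
  Function.LeftInverse.injective fun y => (hop x y).2

theorem op_bijective (x : X) : Function.Bijective (op x) :=
  Function.bijective_iff_has_inverse.2 ⟨lam x, fun y => (hop x y).1, fun y => (hop x y).2⟩

theorem rho_eq_op_lam (hinv : ∀ x y, lam (lam x y) (rho y x) = x) (x y : X) :
    rho y x = op (lam x y) x := by
  simpa [hinv] using ((hop (lam x y) (rho y x)).2).symm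

theorem lam_lam_op_comm (hinv : ∀ x y, lam (lam x y) (rho y x) = x)
    (hbraid : ∀ x y z, lam (lam x y) (lam (rho y x) z) = lam x (lam y z)) (x u z : X) :
    lam u (lam (op u x) z) = lam x (lam (op x u) z) := by
  simpa [rho_eq_op_lam hop hinv, (hop x u).1] using hbraid x (op x u) z

theorem op_op_comm (hcomm : ∀ x u z, lam u (lam (op u x) z) = lam x (lam (op x u) z))
    (x y z : X) : op (op x y) (op x z) = op (op y x) (op y z) := by
  have h : lam y (lam (op y x) (op (op x y) (op x z))) = z := by
    rw [hcomm, (hop _ _).1, (hop _ _).1]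
  conv_rhs => rw [← h, (hop _ _).2, (hop _ _).2]

theorem op_self_eq_iff (hinv₁ : ∀ x y, lam (lam x y) (rho y x) = x)
    (hinv₂ : ∀ x y, rho (rho y x) (lam x y) = y)
    (hrho : ∀ y, Function.Injective (rho y)) (x t : X) :
    op x x = t ↔ rho t x = t := by
  have hlam : op x x = t ↔ lam x t = x := by
    constructor
    · rintro rfl
      exact (hop x x).1
    · intro h
      simpa only [h] using (hop x t).2
  rw [hlam]
  constructor
  · intro h
    apply lam_injective hop x
    simpa only [h] using hinv₁ x t
  · intro h
    apply hrho t
    simpa only [h] using hinv₂ x t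

end OpOfLam

theorem stmt1_general {X : Type*} (r : X × X → X × X) (lam rho : X → X → X)
    (hr : ∀ x y, r (x, y) = (lam x y, rho y x))
    (hrho : ∀ y, Function.Bijective (rho y))
    (hinv : r ∘ r = id)
    (hbraid : (r1map r) ∘ (r2map r) ∘ (r1map r) = (r2map r) ∘ (r1map r) ∘ (r2map r))
    (op : X → X → X) (hop : ∀ x y, lam x (op x y) = y ∧ op x (lam x y) = y) :
    IsCycleSet op ∧ IsNonDeg op := by
  have hinv₁ := lam_lam_rho_of_involutive hr hinv
  have hinv₂ := rho_rho_lam_of_involutive hr hinv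
  have hcomm := lam_lam_op_comm hop hinv₁ (lam_lam_of_braid hr hbraid)
  refine ⟨⟨op_bijective hop, op_op_comm hop hcomm⟩, ?_⟩
  refine Function.bijective_iff_existsUnique _ |>.2 fun t => ?_
  simpa only [op_self_eq_iff hop hinv₁ hinv₂ (fun y => (hrho y).1)] using
    (hrho t).existsUnique t

/-- A non-degenerate involutive solution of the Yang–Baxter equation
gives a non-degenerate left cycle set via `x·y := λ_x⁻¹(y)`. -/
theorem stmt1 {X : Type*} (r : X × X → X × X) (lam rho : X → X → X)
    (hr : ∀ x y, r (x, y) = (lam x y, rho y x))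
    (hlam : ∀ x, Function.Bijective (lam x))
    (hrho : ∀ y, Function.Bijective (rho y))
    (hinv : r ∘ r = id)
    (hbraid : (r1map r) ∘ (r2map r) ∘ (r1map r) = (r2map r) ∘ (r1map r) ∘ (r2map r))
    (op : X → X → X) (hop : ∀ x y, lam x (op x y) = y ∧ op x (lam x y) = y) :
    IsCycleSet op ∧ IsNonDeg op :=
  stmt1_general r lam rho hr hrho hinv hbraid op hop
end

section
/- Let X be a left cycle set, and let X₁ be the set X × ℤ/2ℤ with operation (x,s)·(y,t) := (x·y, t) if x = y and (x·y, t+1) if x ≠ y. Then X₁ is a left cycle set, and for every automorphism f of X, the map f₁(x,s) := (f(x), s) is an automorphism of X₁. -/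
section DoubleOp

variable {X : Type*} [DecidableEq X]

def parityFlip (x : X) (q : X × ZMod 2) : X × ZMod 2 :=
  (q.1, if x = q.1 then q.2 else q.2 + 1)

theorem parityFlip_involutive (x : X) : Function.Involutive (parityFlip x) := by
  rintro ⟨y, t⟩
  by_cases hxy : x = y <;> simp [parityFlip, hxy, add_assoc, CharTwo.add_self_eq_zero]

theorem doubleOp_eq_prodMap_comp_parityFlip (op : X → X → X) (p : X × ZMod 2) :
    doubleOp op p = Prod.map (op p.1) id ∘ parityFlip p.1 :=
  rfl

theorem doubleOp_bijective {op : X → X → X} {p : X × ZMod 2} (hp : Function.Bijective (op p.1)) :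
    Function.Bijective (doubleOp op p) := by
  rw [doubleOp_eq_prodMap_comp_parityFlip]
  exact (hp.prodMap Function.bijective_id).comp (parityFlip_involutive p.1).bijective

/- Since `σ_x` is injective, both sides have second coordinate `u + [x ≠ z] + [y ≠ z]`,
which is symmetric in `x` and `y`. -/
theorem doubleOp_cycloid {op : X → X → X} (hinj : ∀ x, Function.Injective (op x))
    (hcyc : ∀ x y z, op (op x y) (op x z) = op (op y x) (op y z)) (p q r : X × ZMod 2) :
    doubleOp op (doubleOp op p q) (doubleOp op p r) =
      doubleOp op (doubleOp op q p) (doubleOp op q r) := by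
  obtain ⟨x, _⟩ := p
  obtain ⟨y, _⟩ := q
  obtain ⟨z, u⟩ := r
  simp only [doubleOp, Prod.mk.injEq, (hinj _).eq_iff]
  refine ⟨hcyc x y z, ?_⟩
  split_ifs <;> subst_vars <;> simp_all [add_assoc, CharTwo.add_self_eq_zero]

theorem isCycleSet_doubleOp {op : X → X → X} (h : IsCycleSet op) : IsCycleSet (doubleOp op) :=
  ⟨fun p => doubleOp_bijective (h.1 p.1), doubleOp_cycloid (fun x => (h.1 x).1) h.2⟩

theorem isAut_doubleOp_prodMap {op : X → X → X} {f : X → X} (hf : IsAut op f) :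
    IsAut (doubleOp op) (Prod.map f id) := by
  refine ⟨hf.1.prodMap Function.bijective_id, ?_⟩
  rintro ⟨x, _⟩ ⟨y, _⟩
  simp only [doubleOp, Prod.map, hf.2, hf.1.1.eq_iff, id]

end DoubleOp

/-- `X × ℤ/2ℤ` with `(x,s)·(y,t) = (x·y, t + 1 - δ_{x,y})` is a cycle
set, and any automorphism `f` of `X` lifts to the automorphism `(x,s) ↦ (f x, s)`. -/
theorem stmt3 {X : Type*} [DecidableEq X] (op : X → X → X) (h : IsCycleSet op) :
    IsCycleSet (doubleOp op) ∧
    ∀ f : X → X, IsAut op f →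
      IsAut (doubleOp op) (fun p : X × ZMod 2 => (f p.1, p.2)) :=
  ⟨isCycleSet_doubleOp h, fun _ hf => isAut_doubleOp_prodMap hf⟩
end

section
/- Let X be a left cycle set, α an automorphism of X, and z ∉ X. Define an operation ∘ on X ∪ {z} by: x∘y = x·y if x,y ∈ X; x∘z = z for all x; z∘y = α(y) for y ∈ X. Then (X ∪ {z}, ∘) is a left cycle set, and if X is square-free then so is X ∪ {z}. -/
open Function

theorem Option.map_bijective {α β : Type*} {f : α → β} (hf : Bijective f) :
    Bijective (Option.map f) :=
  (Equiv.optionCongr (Equiv.ofBijective f hf)).bijective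

section extOp

variable {X : Type*} {op : X → X → X} {α : X → X}

theorem extOp_eq_map (a : Option X) : extOp op α a = Option.map (a.elim α op) := by
  funext b
  cases a <;> cases b <;> rfl

theorem extOp_bijective (hop : ∀ x, Bijective (op x)) (hα : Bijective α) (a : Option X) :
    Bijective (extOp op α a) := by
  rw [extOp_eq_map]
  cases a with
  | none => exact Option.map_bijective hα
  | some x => exact Option.map_bijective (hop x)

theorem extOp_cycloid (hop : ∀ x y z, op (op x y) (op x z) = op (op y x) (op y z))
    (hα : ∀ x y, α (op x y) = op (α x) (α y)) (a b c : Option X) :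
    extOp op α (extOp op α a b) (extOp op α a c) =
      extOp op α (extOp op α b a) (extOp op α b c) := by
  rcases a with _ | x <;> rcases b with _ | y <;> rcases c with _ | z <;>
    simp only [extOp, hα, hop]

theorem IsSquareFree.extOp (hsf : IsSquareFree op) : IsSquareFree (extOp op α) := by
  rintro (_ | x)
  · rfl
  · exact congrArg some (hsf x)

end extOp

/-- The one-sided extension `X ∪ {z}` of a cycle set `X` by an
automorphism `α` is a cycle set, square-free if `X` is. -/
theorem stmt4 {X : Type*} (op : X → X → X) (h : IsCycleSet op)
    (α : X → X) (hα : IsAut op α) :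
    IsCycleSet (extOp op α) ∧ (IsSquareFree op → IsSquareFree (extOp op α)) :=
  ⟨⟨extOp_bijective h.1 hα.1, extOp_cycloid h.2 hα.2⟩, IsSquareFree.extOp⟩
end

section
/- Let X be a left cycle set, α ∈ Aut(X), z ∉ X, and suppose α ≠ σ_x for all x ∈ X. Then the retraction σ(X ∪ {z}) of the one-sided extension (X ∪ {z}, ∘) (where x∘y = x·y for x,y ∈ X, x∘z = z, z∘y = α(y)) is isomorphic as a left cycle set to the set σ(X) ∪ {σ_z} with operation: σ_x ∘ σ_y = σ_{x·y} for x,y ∈ X, σ_x ∘ σ_z = σ_z, and σ_z ∘ σ_y = σ_{α(y)}. -/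
theorem exists_equiv_map_op_of_surjective_of_fibres_eq {W A B : Type*}
    {opW : W → W → W} {opA : A → A → A} {opB : B → B → B} {ρ : W → A} {ι : W → B}
    (hρ : Function.Surjective ρ) (hι : Function.Surjective ι)
    (hρop : ∀ w w', opA (ρ w) (ρ w') = ρ (opW w w'))
    (hιop : ∀ w w', opB (ι w) (ι w') = ι (opW w w'))
    (hfib : ∀ w w', ρ w = ρ w' ↔ ι w = ι w') :
    ∃ φ : A ≃ B, (∀ w, φ (ρ w) = ι w) ∧ ∀ a b, φ (opA a b) = opB (φ a) (φ b) := by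
  set s := Function.surjInv hρ
  have hφρ : ∀ w, ι (s (ρ w)) = ι w := fun w => (hfib _ _).1 (Function.surjInv_eq hρ _)
  have hbij : Function.Bijective (ι ∘ s) := by
    refine ⟨fun a b hab => ?_, fun b => ?_⟩
    · rw [← Function.surjInv_eq hρ a, ← Function.surjInv_eq hρ b]
      exact (hfib _ _).2 hab
    · obtain ⟨w, rfl⟩ := hι b
      exact ⟨ρ w, hφρ w⟩
  refine ⟨Equiv.ofBijective _ hbij, hφρ, fun a b => ?_⟩
  obtain ⟨w, rfl⟩ := hρ a
  obtain ⟨w', rfl⟩ := hρ b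
  simp only [Equiv.ofBijective_apply, Function.comp_apply, hρop, hφρ, hιop]

theorem extOp_eq_map_elim {X : Type*} (op : X → X → X) (α : X → X) (w : Option X) :
    extOp op α w = Option.map (w.elim α op) := by
  funext w'
  cases w <;> cases w' <;> rfl

theorem extOp_eq_extOp_iff {X : Type*} {op : X → X → X} {α : X → X}
    (hne : ∀ x : X, α ≠ op x) (w w' : Option X) :
    extOp op α w = extOp op α w' ↔
      w.map (Set.rangeFactorization op) = w'.map (Set.rangeFactorization op) := by
  rw [extOp_eq_map_elim, extOp_eq_map_elim, Option.map_injective'.eq_iff]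
  cases w <;> cases w'
  all_goals simp [hne, (hne _).symm, Set.rangeFactorization, Subtype.ext_iff]

theorem stmt5_general {X : Type*} (op : X → X → X)
    (α : X → X) (hne : ∀ x : X, α ≠ op x)
    (mulO : Option ↥(Set.range op) → Option ↥(Set.range op) → Option ↥(Set.range op))
    (h1 : ∀ x y : X, mulO (some ⟨op x, x, rfl⟩) (some ⟨op y, y, rfl⟩) =
        some ⟨op (op x y), op x y, rfl⟩)
    (h2 : ∀ a, mulO a none = none)
    (h3 : ∀ y : X, mulO none (some ⟨op y, y, rfl⟩) = some ⟨op (α y), α y, rfl⟩)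
    (mulT : ↥(Set.range (extOp op α)) → ↥(Set.range (extOp op α)) →
      ↥(Set.range (extOp op α)))
    (hT : ∀ w w', mulT ⟨extOp op α w, w, rfl⟩ ⟨extOp op α w', w', rfl⟩ =
        ⟨extOp op α (extOp op α w w'), extOp op α w w', rfl⟩) :
    ∃ φ : ↥(Set.range (extOp op α)) ≃ Option ↥(Set.range op),
      (∀ x : X, φ ⟨extOp op α (some x), some x, rfl⟩ = some ⟨op x, x, rfl⟩) ∧
      φ ⟨extOp op α none, none, rfl⟩ = none ∧
      ∀ a b, φ (mulT a b) = mulO (φ a) (φ b) := by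
  have hι : Function.Surjective (Option.map (Set.rangeFactorization op)) := by
    rintro (_ | ⟨_, x, rfl⟩)
    exacts [⟨none, rfl⟩, ⟨some x, rfl⟩]
  have hιop : ∀ w w', mulO (w.map (Set.rangeFactorization op))
      (w'.map (Set.rangeFactorization op)) =
        (extOp op α w w').map (Set.rangeFactorization op) := by
    rintro (_ | x) (_ | y)
    exacts [h2 _, h3 y, h2 _, h1 x y]
  obtain ⟨φ, hφ, hφop⟩ := exists_equiv_map_op_of_surjective_of_fibres_eq
    Set.rangeFactorization_surjective hι hT hιop
    fun w w' => Subtype.ext_iff.trans (extOp_eq_extOp_iff hne w w')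
  exact ⟨φ, fun x => hφ (some x), hφ none, hφop⟩

/-- If `α ≠ σ_x` for all `x`, the retraction of the one-sided
extension `X ∪ {z}` is isomorphic to `σ(X) ∪ {σ_z}` with the indicated operation. -/
theorem stmt5 {X : Type*} (op : X → X → X) (h : IsCycleSet op)
    (α : X → X) (hα : IsAut op α) (hne : ∀ x : X, α ≠ op x)
    (mulO : Option ↥(Set.range op) → Option ↥(Set.range op) → Option ↥(Set.range op))
    (h1 : ∀ x y : X, mulO (some ⟨op x, x, rfl⟩) (some ⟨op y, y, rfl⟩) =
        some ⟨op (op x y), op x y, rfl⟩)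
    (h2 : ∀ a, mulO a none = none)
    (h3 : ∀ y : X, mulO none (some ⟨op y, y, rfl⟩) = some ⟨op (α y), α y, rfl⟩)
    (mulT : ↥(Set.range (extOp op α)) → ↥(Set.range (extOp op α)) →
      ↥(Set.range (extOp op α)))
    (hT : ∀ w w', mulT ⟨extOp op α w, w, rfl⟩ ⟨extOp op α w', w', rfl⟩ =
        ⟨extOp op α (extOp op α w w'), extOp op α w w', rfl⟩) :
    ∃ φ : ↥(Set.range (extOp op α)) ≃ Option ↥(Set.range op),
      (∀ x : X, φ ⟨extOp op α (some x), some x, rfl⟩ = some ⟨op x, x, rfl⟩) ∧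
      φ ⟨extOp op α none, none, rfl⟩ = none ∧
      ∀ a b, φ (mulT a b) = mulO (φ a) (φ b) :=
  stmt5_general op α hne mulO h1 h2 h3 mulT hT
end

section
/- Let S be a finite abelian group, X a left cycle set, and f: X×X → S a function satisfying f(i,k) + f(i·j, i·k) = f(j,k) + f(j·i, j·k) for all i,j,k ∈ X. Then the operation (s,i)·(t,j) := (t + f(i,j), i·j) on S×X makes S×X a left cycle set. -/
/-! The first coordinate of `((s,x)·(t,y))·((s,x)·(u,z))` is `u + f x z + f (x·y) (x·z)`, so the
cocycle identity on `f` is exactly the first coordinate of the cycloid equation on `S × X`. -/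

section CocycleExtension

variable {X S : Type*}

def cocycleExtOp [Add S] (op : X → X → X) (f : X → X → S) (p q : S × X) : S × X :=
  (q.1 + f p.2 q.2, op p.2 q.2)

theorem bijective_cocycleExtOp [AddGroup S] {op : X → X → X} {x : X}
    (hx : Function.Bijective (op x)) (f : X → X → S) (s : S) :
    Function.Bijective (cocycleExtOp op f (s, x)) := by
  constructor
  · rintro ⟨t, y⟩ ⟨u, z⟩ he
    obtain ⟨hs, hxyz⟩ := Prod.mk.inj he
    obtain rfl : y = z := hx.1 hxyz
    simpa using hs
  · rintro ⟨t, y⟩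
    obtain ⟨z, rfl⟩ := hx.2 y
    exact ⟨(t - f x z, z), by simp [cocycleExtOp]⟩

theorem cocycleExtOp_cycloid [AddSemigroup S] {op : X → X → X} {f : X → X → S}
    (hop : ∀ x y z, op (op x y) (op x z) = op (op y x) (op y z))
    (hf : ∀ i j k, f i k + f (op i j) (op i k) = f j k + f (op j i) (op j k)) (p q r : S × X) :
    cocycleExtOp op f (cocycleExtOp op f p q) (cocycleExtOp op f p r) =
      cocycleExtOp op f (cocycleExtOp op f q p) (cocycleExtOp op f q r) := by
  simp only [cocycleExtOp, add_assoc, hf p.2 q.2 r.2, hop p.2 q.2 r.2]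

theorem IsCycleSet.cocycleExt [AddGroup S] {op : X → X → X} (h : IsCycleSet op)
    {f : X → X → S}
    (hf : ∀ i j k, f i k + f (op i j) (op i k) = f j k + f (op j i) (op j k)) :
    IsCycleSet (cocycleExtOp op f) :=
  ⟨fun p => bijective_cocycleExtOp (h.1 p.2) f p.1, cocycleExtOp_cycloid h.2 hf⟩

end CocycleExtension

theorem stmt9_general {X S : Type*} [AddCommGroup S]
    (op : X → X → X) (h : IsCycleSet op) (f : X → X → S)
    (hf : ∀ i j k, f i k + f (op i j) (op i k) = f j k + f (op j i) (op j k)) :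
    IsCycleSet (fun p q : S × X => (q.1 + f p.2 q.2, op p.2 q.2)) :=
  h.cocycleExt hf

/-- Constant dynamical extension by a 2-cocycle `f` with values in a
finite abelian group `S`. -/
theorem stmt9 {X S : Type*} [AddCommGroup S] [Finite S]
    (op : X → X → X) (h : IsCycleSet op) (f : X → X → S)
    (hf : ∀ i j k, f i k + f (op i j) (op i k) = f j k + f (op j i) (op j k)) :
    IsCycleSet (fun p q : S × X => (q.1 + f p.2 q.2, op p.2 q.2)) :=
  stmt9_general op h f hf
end

section
/- Let X be a left cycle set, k a natural number, and S := ℤ/kℤ. Then the operation on S×X defined by (s,i)·(t,j) := (t, i·j) if i = j and (t+1, i·j) if i ≠ j makes S×X a left cycle set, and if X is square-free then so is S×X. -/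
section TwistedProduct

variable {S X : Type*} [DecidableEq X]

def twistedOp (f : Equiv.Perm S) (op : X → X → X) : S × X → S × X → S × X :=
  fun p q => (if p.2 = q.2 then q.1 else f q.1, op p.2 q.2)

theorem bijective_twistedOp (f : Equiv.Perm S) {op : X → X → X} {x : X}
    (hx : Function.Bijective (op x)) (s : S) : Function.Bijective (twistedOp f op (s, x)) := by
  -- after swapping the factors, `σ_(s,x)` is the shear `(j, t) ↦ (x·j, f^[x ≠ j] t)`
  let e : S × X ≃ S × X := (Equiv.prodComm S X).trans <|
    (Equiv.prodShear (Equiv.ofBijective _ hx)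
      (fun j => if x = j then Equiv.refl S else f)).trans (Equiv.prodComm X S)
  convert e.bijective using 1
  ext ⟨t, j⟩ <;> by_cases hxj : x = j <;> simp [twistedOp, e, hxj]

theorem twistedOp_cycloid (f : Equiv.Perm S) {op : X → X → X}
    (hinj : ∀ x, Function.Injective (op x))
    (hcyc : ∀ x y z, op (op x y) (op x z) = op (op y x) (op y z)) (p q r : S × X) :
    twistedOp f op (twistedOp f op p q) (twistedOp f op p r) =
      twistedOp f op (twistedOp f op q p) (twistedOp f op q r) := by
  obtain ⟨-, x⟩ := p
  obtain ⟨-, y⟩ := q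
  obtain ⟨u, z⟩ := r
  -- as `x·y = x·z ↔ y = z`, both sides apply `f` once for each of `x ≠ z`, `y ≠ z`
  simp only [twistedOp, (hinj _).eq_iff, Prod.mk.injEq, hcyc x y z, and_true]
  by_cases hyz : y = z <;> by_cases hxz : x = z <;> simp [hyz, hxz]

theorem isCycleSet_twistedOp (f : Equiv.Perm S) {op : X → X → X} (h : IsCycleSet op) :
    IsCycleSet (twistedOp f op) :=
  ⟨fun p => bijective_twistedOp f (h.1 p.2) p.1,
    twistedOp_cycloid f (fun x => (h.1 x).injective) h.2⟩

theorem isSquareFree_twistedOp (f : Equiv.Perm S) {op : X → X → X} (h : IsSquareFree op) :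
    IsSquareFree (twistedOp f op) := fun p => by
  simp [twistedOp, h p.2]

end TwistedProduct

/-- `ℤ/kℤ × X` with `(s,i)·(t,j) = (t + 1 - δ_{i,j}, i·j)` is a
cycle set, square-free if `X` is. -/
theorem stmt10 {X : Type*} [DecidableEq X] (op : X → X → X) (k : ℕ)
    (h : IsCycleSet op) :
    IsCycleSet (fun p q : ZMod k × X =>
        (if p.2 = q.2 then q.1 else q.1 + 1, op p.2 q.2)) ∧
    (IsSquareFree op → IsSquareFree (fun p q : ZMod k × X =>
        (if p.2 = q.2 then q.1 else q.1 + 1, op p.2 q.2))) :=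
  ⟨isCycleSet_twistedOp (Equiv.addRight 1) h, isSquareFree_twistedOp (Equiv.addRight 1)⟩
end

section
/- Let A, B be abelian groups, I a set, φ₁: A → B a function with φ₁(-a) = φ₁(a) for all a, and φ₂: B → A a group homomorphism. Define on X(A,B,I) := A×B×I the operation (a,b,i)·(c,d,j) := (c, d - φ₁(a-c), j) if i = j and (c - φ₂(b), d, j) if i ≠ j. Then X(A,B,I) is a non-degenerate left cycle set. -/
/-! Left multiplication by `(a, b, i)` shears the `B`-coordinate on the fibre over `i` and
translates the `A`-coordinate by `-φ₂ b` on the other fibres, so it is inverted by the opposite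
shear and translation. The cycloid identity is checked according to which of the three indices
coincide; when `x` and `y` share an index that `z` does not, the two sides differ by
`φ₂ (φ₁ (a - c) - φ₁ (c - a))`, which vanishes because `φ₁` is even. -/

section

variable {A B I : Type*} [AddCommGroup A] [AddCommGroup B] [DecidableEq I]
  (φ₁ : A → B) (φ₂ : B →+ A)

def bcjoDiv (p q : A × B × I) : A × B × I :=
  if p.2.2 = q.2.2 then (q.1, q.2.1 + φ₁ (p.1 - q.1), q.2.2)
  else (q.1 + φ₂ p.2.1, q.2.1, q.2.2)

theorem bcjoDiv_bcjoOp (p : A × B × I) :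
    Function.LeftInverse (bcjoDiv φ₁ φ₂ p) (bcjoOp φ₁ φ₂ p) := by
  intro q
  by_cases h : p.2.2 = q.2.2 <;> simp [bcjoOp, bcjoDiv, h]

theorem bcjoOp_bcjoDiv (p : A × B × I) :
    Function.RightInverse (bcjoDiv φ₁ φ₂ p) (bcjoOp φ₁ φ₂ p) := by
  intro q
  by_cases h : p.2.2 = q.2.2 <;> simp [bcjoOp, bcjoDiv, h]

theorem bcjoOp_bijective (p : A × B × I) : Function.Bijective (bcjoOp φ₁ φ₂ p) :=
  ⟨(bcjoDiv_bcjoOp φ₁ φ₂ p).injective, (bcjoOp_bcjoDiv φ₁ φ₂ p).surjective⟩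

theorem bcjoOp_cycloid (hφ₁ : ∀ a, φ₁ (-a) = φ₁ a) (x y z : A × B × I) :
    bcjoOp φ₁ φ₂ (bcjoOp φ₁ φ₂ x y) (bcjoOp φ₁ φ₂ x z) =
      bcjoOp φ₁ φ₂ (bcjoOp φ₁ φ₂ y x) (bcjoOp φ₁ φ₂ y z) := by
  obtain ⟨a, b, i⟩ := x
  obtain ⟨c, d, j⟩ := y
  obtain ⟨e, f, k⟩ := z
  obtain rfl | hij := eq_or_ne i j
  · obtain rfl | hik := eq_or_ne i k
    · simp only [bcjoOp, if_true, Prod.mk.injEq, true_and, and_true]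
      abel
    · have hφ : φ₁ (c - a) = φ₁ (a - c) := by rw [← neg_sub, hφ₁]
      simp only [bcjoOp, if_true, hik, if_false, map_sub, hφ, Prod.mk.injEq, and_true]
      abel
  · obtain rfl | hik := eq_or_ne i k
    · simp only [bcjoOp, if_true, hij, hij.symm, if_false, sub_sub_sub_cancel_right]
    · obtain rfl | hjk := eq_or_ne j k
      · simp only [bcjoOp, if_true, hij, hij.symm, if_false, sub_sub_sub_cancel_right]
      · simp only [bcjoOp, hij, hij.symm, hik, hjk, if_false, Prod.mk.injEq, and_true]
        abel

theorem bcjoOp_self (p : A × B × I) :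
    bcjoOp φ₁ φ₂ p p = Prod.map id (Prod.map (· - φ₁ 0) id) p := by
  simp [bcjoOp, Prod.map]

theorem bcjoOp_self_bijective : Function.Bijective fun p : A × B × I => bcjoOp φ₁ φ₂ p p := by
  simp only [bcjoOp_self]
  exact Function.bijective_id.prodMap ((Equiv.subRight (φ₁ 0)).bijective.prodMap
    Function.bijective_id)

end

/-- The Bachiller–Cedó–Jespers–Okniński construction `X(A,B,I)` is a
non-degenerate left cycle set. -/
theorem stmt11 {A B I : Type*} [AddCommGroup A] [AddCommGroup B] [DecidableEq I]
    (φ₁ : A → B) (φ₂ : B →+ A) (hφ₁ : ∀ a, φ₁ (-a) = φ₁ a) :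
    IsCycleSet (bcjoOp (I := I) φ₁ φ₂) ∧ IsNonDeg (bcjoOp (I := I) φ₁ φ₂) :=
  ⟨⟨bcjoOp_bijective φ₁ φ₂, bcjoOp_cycloid φ₁ φ₂ hφ₁⟩, bcjoOp_self_bijective φ₁ φ₂⟩
end
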